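/- There exists a universal constant c > 0 such that for every k ≥ 2 and every ε ∈ (0,1/4], any (n, ε)-uniformity test using the family 𝒲_⊥^{1/√k} of partial-erasure channels with leakage parameter η = 1/√k (in particular, any sequentially interactive uniformity-testing protocol under these constraints) must satisfy n ≥ c · k / ε². -/

import Mathlib

/-!
Le Cam's method against Paninski's mixture. If the test works, then for some public seed the
transcript law under the uniform mixture of the perturbations `p_z` (`z ∈ {±1}^k`) is `ℓ¹`-far
from the law under the uniform input. By Cauchy–Schwarz it is then far in `χ²`. That `χ²` is the
average over pairs `(z, z')` of `∑ P_z P_z' / P_u`. This quantity tensorizes along the interactive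
protocol: whatever the prefix, the next partial-erasure channel contributes a factor at most
`1 + (4ηε²/k)⟨z, z'⟩ + 4ε²/(2k-1)`. Averaging `exp (c⟨z, z'⟩)` over independent signs gives
`cosh c ^ k ≤ exp (k c² / 2)`. For `η = 1/√k` both exponents are `O(nε²/k)`, so `n ≳ k/ε²`.
-/

open Finset

namespace Paper

/-- A probability distribution on a finite type, given by its mass function. -/
def IsDist {α : Type*} [Fintype α] (p : α → ℝ) : Prop :=
  (∀ a, 0 ≤ p a) ∧ ∑ a, p a = 1

/-- A channel (row-stochastic kernel) from `α` to the finite alphabet `𝒴`. -/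
def IsChannel {α 𝒴 : Type*} [Fintype α] [Fintype 𝒴] (W : α → 𝒴 → ℝ) : Prop :=
  ∀ x, IsDist (W x)

/-- Total variation distance between mass functions on a finite type. -/
noncomputable def tvDist {α : Type*} [Fintype α] (p q : α → ℝ) : ℝ :=
  (∑ a, |p a - q a|) / 2

/-- The element `2i-1` (1-indexed) of `[2k]`, i.e. index `2i` in 0-indexed terms. -/
def lo {k : ℕ} (i : Fin k) : Fin (2 * k) := ⟨2 * i.val, by have := i.isLt; omega⟩

/-- The element `2i` (1-indexed) of `[2k]`, i.e. index `2i+1` in 0-indexed terms. -/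
def hi {k : ℕ} (i : Fin k) : Fin (2 * k) := ⟨2 * i.val + 1, by have := i.isLt; omega⟩

/-- The channel information matrix `H(W)`  (division by `0` yields `0` in Lean,
matching the convention that terms with zero denominator vanish). -/
noncomputable def HMat (k : ℕ) {𝒴 : Type*} [Fintype 𝒴] (W : Fin (2 * k) → 𝒴 → ℝ) :
    Matrix (Fin k) (Fin k) ℝ := fun i j =>
  ∑ y, (W (lo i) y - W (hi i) y) * (W (lo j) y - W (hi j) y) / (∑ x, W x y)

/-- Nuclear norm of a real symmetric matrix (sum of absolute values of eigenvalues). -/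
noncomputable def nucNorm {k : ℕ} (A : Matrix (Fin k) (Fin k) ℝ) : ℝ :=
  if h : A.IsHermitian then ∑ i, |h.eigenvalues i| else 0

/-- Operator (spectral) norm of a real symmetric matrix. -/
noncomputable def opNorm {k : ℕ} (A : Matrix (Fin k) (Fin k) ℝ) : ℝ :=
  if h : A.IsHermitian then ⨆ i, |h.eigenvalues i| else 0

/-- Frobenius norm of a matrix. -/
noncomputable def frobNorm {k : ℕ} (A : Matrix (Fin k) (Fin k) ℝ) : ℝ :=
  Real.sqrt (∑ i, ∑ j, (A i j) ^ 2)

/-- `‖𝒲‖_*`, the maximal nuclear norm of `H(W)` over the family. -/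
noncomputable def famNuc (k : ℕ) {𝒴 : Type*} [Fintype 𝒴]
    (𝒲 : Set (Fin (2 * k) → 𝒴 → ℝ)) : ℝ :=
  sSup ((fun W => nucNorm (HMat k W)) '' 𝒲)

/-- `‖𝒲‖_op`, the maximal operator norm of `H(W)` over the family. -/
noncomputable def famOp (k : ℕ) {𝒴 : Type*} [Fintype 𝒴]
    (𝒲 : Set (Fin (2 * k) → 𝒴 → ℝ)) : ℝ :=
  sSup ((fun W => opNorm (HMat k W)) '' 𝒲)

/-- `‖𝒲‖_F`, the maximal Frobenius norm of `H(W)` over the family. -/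
noncomputable def famFrob (k : ℕ) {𝒴 : Type*} [Fintype 𝒴]
    (𝒲 : Set (Fin (2 * k) → 𝒴 → ℝ)) : ℝ :=
  sSup ((fun W => frobNorm (HMat k W)) '' 𝒲)

/-- A deterministic sequentially interactive protocol over `n` users: to each user `t`
and each message prefix it assigns a channel. -/
def Protocol (k n : ℕ) (𝒴 : Type*) : Type _ :=
  (t : Fin n) → (Fin t.val → 𝒴) → Fin (2 * k) → 𝒴 → ℝ

/-- All channels used by the protocol belong to the family `𝒲`. -/
def UsesFamily {k n : ℕ} {𝒴 : Type*} (π : Protocol k n 𝒴)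
    (𝒲 : Set (Fin (2 * k) → 𝒴 → ℝ)) : Prop :=
  ∀ t pre, π t pre ∈ 𝒲

/-- All kernels used by the protocol are genuine channels. -/
def ChannelProtocol {k n : ℕ} {𝒴 : Type*} [Fintype 𝒴] (π : Protocol k n 𝒴) : Prop :=
  ∀ t pre, IsChannel (π t pre)

/-- Distribution of the first `t` messages of the transcript when the inputs are
i.i.d. with law `p`. -/
noncomputable def prefixDist {k n : ℕ} {𝒴 : Type*} [Fintype 𝒴] (π : Protocol k n 𝒴)
    (p : Fin (2 * k) → ℝ) (t : ℕ) (ht : t ≤ n) (y : Fin t → 𝒴) : ℝ :=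
  ∏ s : Fin t, ∑ x, p x *
    π ⟨s.val, lt_of_lt_of_le s.isLt ht⟩ (fun r => y ⟨r.val, lt_trans r.isLt s.isLt⟩) x (y s)

/-- Distribution of the full transcript `Y^n` when the inputs are i.i.d. with law `p`. -/
noncomputable def transDist {k n : ℕ} {𝒴 : Type*} [Fintype 𝒴] (π : Protocol k n 𝒴)
    (p : Fin (2 * k) → ℝ) (y : Fin n → 𝒴) : ℝ :=
  prefixDist π p n le_rfl y

/-- The uniform distribution on `[2k]`. -/
noncomputable def uniform2k (k : ℕ) : Fin (2 * k) → ℝ := fun _ => (2 * (k : ℝ))⁻¹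

/-- An `(n, ε)`-estimator using `𝒲`: a public-coin sequentially interactive protocol
(seed distribution `μ`, protocols `π u`, channels from `𝒲`) together with an estimator
`est` such that, for every input distribution `p`, the probability that the estimate is
more than `ε` away from `p` in total variation is at most `1/100`. -/
def IsEstimator {k n : ℕ} {𝒴 𝒰 : Type*} [Fintype 𝒴] [Fintype 𝒰]
    (𝒲 : Set (Fin (2 * k) → 𝒴 → ℝ)) (μ : 𝒰 → ℝ) (π : 𝒰 → Protocol k n 𝒴)
    (est : (Fin n → 𝒴) → 𝒰 → Fin (2 * k) → ℝ) (ε : ℝ) : Prop :=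
  IsDist μ ∧ (∀ u, UsesFamily (π u) 𝒲) ∧ (∀ u, ChannelProtocol (π u)) ∧
  (∀ y u, IsDist (est y u)) ∧
  ∀ p : Fin (2 * k) → ℝ, IsDist p →
    (∑ u, ∑ y : Fin n → 𝒴, μ u * (transDist (π u) p y *
      (if ε < tvDist (est y u) p then (1 : ℝ) else 0))) ≤ 1 / 100

/-- An `(n, ε)`-uniformity test using `𝒲`: a public-coin sequentially interactive
protocol together with a randomized decision rule `T` (probability of output `1`)
accepting uniform and rejecting `ε`-far distributions with probability `99/100`. -/
def IsUnifTest {k n : ℕ} {𝒴 𝒰 : Type*} [Fintype 𝒴] [Fintype 𝒰]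
    (𝒲 : Set (Fin (2 * k) → 𝒴 → ℝ)) (μ : 𝒰 → ℝ) (π : 𝒰 → Protocol k n 𝒴)
    (T : (Fin n → 𝒴) → 𝒰 → ℝ) (ε : ℝ) : Prop :=
  IsDist μ ∧ (∀ u, UsesFamily (π u) 𝒲) ∧ (∀ u, ChannelProtocol (π u)) ∧
  (∀ y u, T y u ∈ Set.Icc (0 : ℝ) 1) ∧
  (99 / 100 ≤ ∑ u, ∑ y : Fin n → 𝒴, μ u * (transDist (π u) (uniform2k k) y * (1 - T y u))) ∧
  ∀ p : Fin (2 * k) → ℝ, IsDist p → ε ≤ tvDist p (uniform2k k) →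
    99 / 100 ≤ ∑ u, ∑ y : Fin n → 𝒴, μ u * (transDist (π u) p y * T y u)

/-- Mutual information (in nats) of a joint mass function on `A × B`. -/
noncomputable def miNats {A B : Type*} [Fintype A] [Fintype B] (j : A → B → ℝ) : ℝ :=
  ∑ a, ∑ b, j a b * Real.log (j a b / ((∑ b', j a b') * (∑ a', j a' b)))

/-- Mutual information (in bits) of a joint mass function on `A × B`. -/
noncomputable def miBits {A B : Type*} [Fintype A] [Fintype B] (j : A → B → ℝ) : ℝ :=
  ∑ a, ∑ b, j a b * Real.logb 2 (j a b / ((∑ b', j a b') * (∑ a', j a' b)))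

/-- Binary entropy function (in bits). -/
noncomputable def binEnt (t : ℝ) : ℝ :=
  -(t * Real.logb 2 t) - (1 - t) * Real.logb 2 (1 - t)

/-- `±1` encoding of a Boolean. -/
def pm (b : Bool) : ℝ := if b then 1 else -1

/-- The joint mass function of `(Z_i, Y)` obtained from a joint mass function of `(Z, Y)`
for `Z ∈ {−1,+1}^k` (encoded via Booleans). -/
noncomputable def coordJoint {k : ℕ} {𝒴 : Type*} [Fintype 𝒴]
    (j : (Fin k → Bool) → 𝒴 → ℝ) (i : Fin k) : Bool → 𝒴 → ℝ :=
  fun b y => ∑ z : Fin k → Bool, if z i = b then j z y else 0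

/-- The Paninski perturbation `p_z` of the uniform distribution on `[2k]`:
`p_z(2i−1) = (1+2ε z_i)/(2k)` and `p_z(2i) = (1−2ε z_i)/(2k)` (1-indexed). -/
noncomputable def paninski (k : ℕ) (ε : ℝ) (z : Fin k → Bool) : Fin (2 * k) → ℝ :=
  fun x => (1 + (if x.val % 2 = 0 then (1 : ℝ) else -1) * (2 * ε) *
    pm (z ⟨x.val / 2, by have := x.isLt; omega⟩)) / (2 * k)

/-- Chi-square divergence between mass functions on a finite type. -/
noncomputable def chiSq {α : Type*} [Fintype α] (P Q : α → ℝ) : ℝ :=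
  ∑ y, (P y - Q y) ^ 2 / Q y

/-- Kullback–Leibler divergence (in nats) between mass functions on a finite type. -/
noncomputable def klDivNats {α : Type*} [Fintype α] (P Q : α → ℝ) : ℝ :=
  ∑ y, P y * Real.log (P y / Q y)

/-- The leaky-query channel `W_u^η` on output alphabet `[2k] ∪ {1*, 0*}`
(`Sum.inr true = 1*`, `Sum.inr false = 0*`). -/
noncomputable def leaky (k : ℕ) (η : ℝ) (u : Fin (2 * k) → ℝ) :
    Fin (2 * k) → (Fin (2 * k) ⊕ Bool) → ℝ :=
  fun x y => Sum.elim (fun x' => if x' = x then η else 0)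
    (fun b => if b then (1 - η) * u x else (1 - η) * (1 - u x)) y

/-- The vector `δ(u)` associated with a leaky-query channel. -/
noncomputable def leakyDelta (k : ℕ) (u : Fin (2 * k) → ℝ) : Fin k → ℝ :=
  fun i => (u (lo i) - u (hi i)) *
    Real.sqrt ((2 * (k : ℝ)) / ((∑ x, u x) * (2 * (k : ℝ) - ∑ x, u x)))

/-- The partial-erasure channel `W_{x*}` on output alphabet `[2k] ∪ {⊥}`. -/
noncomputable def eraseCh (k : ℕ) (η : ℝ) (xs : Fin (2 * k)) :
    Fin (2 * k) → (Fin (2 * k) ⊕ Unit) → ℝ :=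
  fun x y => Sum.elim (fun x' => if x' = x then (if x = xs then 1 else η) else 0)
    (fun _ => if x = xs then 0 else 1 - η) y

/-- The family of all `ρ`-locally differentially private channels from `[2k]` to `𝒴`. -/
def ldpFamily (k : ℕ) {𝒴 : Type*} [Fintype 𝒴] (ρ : ℝ) :
    Set (Fin (2 * k) → 𝒴 → ℝ) :=
  { W | IsChannel W ∧ ∀ x x' y, W x y ≤ Real.exp ρ * W x' y }

noncomputable def channelOutput {α 𝒴 : Type*} [Fintype α] (W : α → 𝒴 → ℝ) (p : α → ℝ)
    (y : 𝒴) : ℝ :=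
  ∑ x, p x * W x y

noncomputable def chiCorr {α : Type*} [Fintype α] (P Q R : α → ℝ) : ℝ :=
  ∑ a, P a * Q a / R a

lemma mul_mul_mul_div_mul {K : Type*} [Field K] (a b d w : K) :
    a * w * (b * w) / (d * w) = a * b / d * w := by
  rcases eq_or_ne w 0 with rfl | hw
  · simp
  · rw [show a * w * (b * w) = a * b * w * w by ring, mul_div_mul_right _ _ hw, mul_div_right_comm]

section FiniteDistributions

variable {α : Type*} [Fintype α]

lemma sum_mul_ite_eq [DecidableEq α] (f : α → ℝ) (a : α) (η : ℝ) :
    ∑ x, f x * (if x = a then 1 else η) = η * ∑ x, f x + (1 - η) * f a := by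
  have h : ∀ x, f x * (if x = a then 1 else η) = η * f x + (1 - η) * (if x = a then f x else 0) :=
    fun x => by split_ifs <;> ring
  simp only [h, sum_add_distrib, ← mul_sum, sum_ite_eq']
  simp

lemma chiCorr_nonneg {P Q R : α → ℝ} (hP : 0 ≤ P) (hQ : 0 ≤ Q) (hR : 0 ≤ R) :
    0 ≤ chiCorr P Q R :=
  sum_nonneg fun a _ => div_nonneg (mul_nonneg (hP a) (hQ a)) (hR a)

lemma chiSq_eq_chiCorr_sub_one {P R : α → ℝ} (hR : ∀ a, R a ≠ 0) (hP1 : ∑ a, P a = 1)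
    (hR1 : ∑ a, R a = 1) : chiSq P R = chiCorr P P R - 1 := by
  have h : ∀ a, (P a - R a) ^ 2 / R a = P a * P a / R a - 2 * P a + R a := fun a => by
    field_simp [hR a]; ring
  simp only [chiSq, chiCorr, h, sum_add_distrib, sum_sub_distrib, ← mul_sum, hP1, hR1]
  ring

lemma sq_sum_abs_sub_le_chiSq {P R : α → ℝ} (hR : ∀ a, 0 < R a) (hR1 : ∑ a, R a = 1) :
    (∑ a, |P a - R a|) ^ 2 ≤ chiSq P R := by
  simpa [chiSq, hR1, sq_abs] using
    sq_sum_div_le_sum_sq_div univ (fun a => |P a - R a|) fun a _ => hR a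

lemma chiCorr_mul_sum {ι : Type*} [Fintype ι] (c : ℝ) (P : ι → α → ℝ) (R : α → ℝ) :
    chiCorr (fun a => c * ∑ i, P i a) (fun a => c * ∑ i, P i a) R =
      c ^ 2 * ∑ i, ∑ j, chiCorr (P i) (P j) R := by
  simp only [chiCorr, mul_sum, sum_mul, sum_div]
  rw [sum_comm]
  refine sum_congr rfl fun i _ => ?_
  rw [sum_comm]
  refine sum_congr rfl fun j _ => sum_congr rfl fun a _ => by ring

lemma exists_sum_abs_sub_ge_of_test {𝒰 : Type*} [Fintype 𝒰] {μ : 𝒰 → ℝ} (hμ : IsDist μ)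
    {P Q : 𝒰 → α → ℝ} (hP : ∀ u, ∑ a, P u a = 1) {T : α → 𝒰 → ℝ}
    (hT : ∀ a u, T a u ∈ Set.Icc (0 : ℝ) 1) {s t : ℝ}
    (hs : s ≤ ∑ u, ∑ a, μ u * (P u a * (1 - T a u)))
    (ht : t ≤ ∑ u, ∑ a, μ u * (Q u a * T a u)) :
    ∃ u, s + t - 1 ≤ ∑ a, |Q u a - P u a| := by
  have : Nonempty 𝒰 := by
    by_contra h
    simpa [not_nonempty_iff.mp h] using hμ.2
  obtain ⟨u₀, hu₀⟩ := Finite.exists_max fun u => ∑ a, |Q u a - P u a|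
  refine ⟨u₀, ?_⟩
  have hgap : ∀ u, ∑ a, μ u * (Q u a * T a u) + ∑ a, μ u * (P u a * (1 - T a u)) - μ u
      ≤ μ u * ∑ a, |Q u a - P u a| := fun u => by
    have hpt : ∀ a, (Q u a - P u a) * T a u ≤ |Q u a - P u a| := fun a =>
      (mul_le_mul_of_nonneg_right (le_abs_self _) (hT a u).1).trans
        (mul_le_of_le_one_right (abs_nonneg _) (hT a u).2)
    have hsplit : ∑ a, μ u * (Q u a * T a u) + ∑ a, μ u * (P u a * (1 - T a u)) - μ u
        = μ u * ∑ a, (Q u a - P u a) * T a u := by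
      simp only [mul_sub, mul_one, sub_mul, sum_sub_distrib, ← mul_sum, hP, mul_one]
      ring
    rw [hsplit]
    exact mul_le_mul_of_nonneg_left (sum_le_sum fun a _ => hpt a) (hμ.1 u)
  calc s + t - 1 ≤ ∑ u, μ u * ∑ a, |Q u a - P u a| := by
        have := sum_le_sum fun u (_ : u ∈ univ) => hgap u
        simp only [sum_sub_distrib, sum_add_distrib, hμ.2] at this
        linarith
    _ ≤ ∑ u, μ u * ∑ a, |Q u₀ a - P u₀ a| :=
        sum_le_sum fun u _ => mul_le_mul_of_nonneg_left (hu₀ u) (hμ.1 u)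
    _ = _ := by rw [← sum_mul, hμ.2, one_mul]

end FiniteDistributions

section Protocols

variable {k n : ℕ} {𝒴 : Type*} [Fintype 𝒴]

lemma channelOutput_nonneg {α : Type*} [Fintype α] {W : α → 𝒴 → ℝ} (hW : IsChannel W)
    {p : α → ℝ} (hp : 0 ≤ p) : 0 ≤ channelOutput W p :=
  fun y => sum_nonneg fun x _ => mul_nonneg (hp x) ((hW x).1 y)

lemma sum_fun_fin_succ {t : ℕ} (g : (Fin (t + 1) → 𝒴) → ℝ) :
    ∑ y, g y = ∑ y : Fin t → 𝒴, ∑ c, g (Fin.snoc y c) := by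
  rw [← (Fin.snocEquiv fun _ => 𝒴).sum_comp, Fintype.sum_prod_type, sum_comm]
  rfl

lemma prefixDist_succ (π : Protocol k n 𝒴) (p : Fin (2 * k) → ℝ) {t : ℕ} (ht : t + 1 ≤ n)
    (y : Fin (t + 1) → 𝒴) :
    prefixDist π p (t + 1) ht y =
      prefixDist π p t (by omega) (Fin.init y) *
        channelOutput (π ⟨t, ht⟩ (Fin.init y)) p (y (Fin.last t)) := by
  rw [prefixDist, Fin.prod_univ_castSucc]
  rfl

lemma prefixDist_snoc (π : Protocol k n 𝒴) (p : Fin (2 * k) → ℝ) {t : ℕ} (ht : t + 1 ≤ n)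
    (y : Fin t → 𝒴) (c : 𝒴) :
    prefixDist π p (t + 1) ht (Fin.snoc y c) =
      prefixDist π p t (by omega) y * channelOutput (π ⟨t, ht⟩ y) p c := by
  rw [prefixDist_succ, Fin.init_snoc, Fin.snoc_last]

lemma sum_prefixDist {π : Protocol k n 𝒴} (hπ : ChannelProtocol π) {p : Fin (2 * k) → ℝ}
    (hp : IsDist p) : ∀ t (ht : t ≤ n), ∑ y, prefixDist π p t ht y = 1
  | 0, _ => by simp [prefixDist]
  | t + 1, ht => by
    have hstep : ∀ y, ∑ c, channelOutput (π ⟨t, ht⟩ y) p c = 1 := fun y => by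
      simp only [channelOutput]
      rw [sum_comm]
      simp only [← mul_sum, (hπ _ y _).2, mul_one, hp.2]
    simp only [sum_fun_fin_succ, prefixDist_snoc, ← mul_sum, hstep, mul_one]
    exact sum_prefixDist hπ hp t (by omega)

lemma prefixDist_nonneg {π : Protocol k n 𝒴} (hπ : ChannelProtocol π) {p : Fin (2 * k) → ℝ}
    (hp : 0 ≤ p) (t : ℕ) (ht : t ≤ n) : 0 ≤ prefixDist π p t ht :=
  fun y => prod_nonneg fun s _ => channelOutput_nonneg (hπ _ _) hp (y s)

lemma prefixDist_pos {π : Protocol k n 𝒴} {p : Fin (2 * k) → ℝ}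
    (hp : ∀ t pre c, 0 < channelOutput (π t pre) p c) (t : ℕ) (ht : t ≤ n) (y : Fin t → 𝒴) :
    0 < prefixDist π p t ht y :=
  prod_pos fun s _ => hp _ _ (y s)

theorem chiCorr_prefixDist_le_pow {π : Protocol k n 𝒴} (hπ : ChannelProtocol π)
    {p q r : Fin (2 * k) → ℝ} (hp : 0 ≤ p) (hq : 0 ≤ q) (hr : 0 ≤ r) {D : ℝ}
    (hstep : ∀ t pre, chiCorr (channelOutput (π t pre) p) (channelOutput (π t pre) q)
      (channelOutput (π t pre) r) ≤ D) :
    ∀ t (ht : t ≤ n), chiCorr (prefixDist π p t ht) (prefixDist π q t ht)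
      (prefixDist π r t ht) ≤ D ^ t
  | 0, _ => by simp [chiCorr, prefixDist]
  | t + 1, ht => by
    have hD : 0 ≤ D := (chiCorr_nonneg (channelOutput_nonneg (hπ _ _) hp)
      (channelOutput_nonneg (hπ _ _) hq) (channelOutput_nonneg (hπ _ _) hr)).trans
        (hstep ⟨0, by omega⟩ finZeroElim)
    have hsplit : ∀ y : Fin t → 𝒴, ∑ c, prefixDist π p (t + 1) ht (Fin.snoc y c) *
        prefixDist π q (t + 1) ht (Fin.snoc y c) / prefixDist π r (t + 1) ht (Fin.snoc y c) =
        prefixDist π p t (by omega) y * prefixDist π q t (by omega) y /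
          prefixDist π r t (by omega) y *
        chiCorr (channelOutput (π ⟨t, ht⟩ y) p) (channelOutput (π ⟨t, ht⟩ y) q)
          (channelOutput (π ⟨t, ht⟩ y) r) := fun y => by
      simp only [prefixDist_snoc, chiCorr, mul_sum]
      exact sum_congr rfl fun c _ => by ring
    calc chiCorr (prefixDist π p (t + 1) ht) (prefixDist π q (t + 1) ht)
          (prefixDist π r (t + 1) ht)
        ≤ ∑ y : Fin t → 𝒴, prefixDist π p t (by omega) y * prefixDist π q t (by omega) y /
            prefixDist π r t (by omega) y * D := by
          rw [chiCorr, sum_fun_fin_succ]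
          simp only [hsplit]
          refine sum_le_sum fun y _ => mul_le_mul_of_nonneg_left (hstep ⟨t, ht⟩ y) ?_
          exact div_nonneg (mul_nonneg (prefixDist_nonneg hπ hp t _ y)
            (prefixDist_nonneg hπ hq t _ y)) (prefixDist_nonneg hπ hr t _ y)
      _ ≤ D ^ t * D := by
          rw [← sum_mul]
          exact mul_le_mul_of_nonneg_right
            (chiCorr_prefixDist_le_pow hπ hp hq hr hstep t (by omega)) hD
      _ = D ^ (t + 1) := (pow_succ D t).symm

end Protocols

section Paninski

variable {k : ℕ}

lemma sum_eq_sum_lo_add_hi (f : Fin (2 * k) → ℝ) :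
    ∑ x, f x = ∑ i : Fin k, (f (lo i) + f (hi i)) := by
  rw [← (finProdFinEquiv.trans (finCongr (mul_comm k 2))).sum_comp, Fintype.sum_prod_type]
  refine sum_congr rfl fun i _ => ?_
  rw [Fin.sum_univ_two]
  congr 2
  · ext; simp [lo, finProdFinEquiv, mul_comm]
  · ext; simp [hi, finProdFinEquiv, add_comm, mul_comm]

lemma sum_uniform2k (hk : 0 < k) : ∑ x, uniform2k k x = 1 := by
  simp only [uniform2k, sum_const, card_univ, Fintype.card_fin, nsmul_eq_mul]
  push_cast
  field_simp

lemma uniform2k_isDist (hk : 0 < k) : IsDist (uniform2k k) :=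
  ⟨fun _ => by unfold uniform2k; positivity, sum_uniform2k hk⟩

lemma abs_pm (b : Bool) : |pm b| = 1 := by cases b <;> simp [pm]

def signInner (z z' : Fin k → Bool) : ℝ := ∑ i, pm (z i) * pm (z' i)

lemma paninski_sub_uniform2k (ε : ℝ) (z : Fin k → Bool) (x : Fin (2 * k)) :
    paninski k ε z x - uniform2k k x =
      (if x.val % 2 = 0 then 1 else -1) * (ε * pm (z ⟨x.val / 2, by omega⟩) / k) := by
  rcases Nat.eq_zero_or_pos k with rfl | hk
  · exact x.elim0
  simp only [paninski, uniform2k]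
  field_simp
  ring

lemma paninski_lo_sub_uniform2k (ε : ℝ) (z : Fin k → Bool) (i : Fin k) :
    paninski k ε z (lo i) - uniform2k k (lo i) = ε * pm (z i) / k := by
  rw [paninski_sub_uniform2k]
  simp [lo]

lemma paninski_hi_sub_uniform2k (ε : ℝ) (z : Fin k → Bool) (i : Fin k) :
    paninski k ε z (hi i) - uniform2k k (hi i) = -(ε * pm (z i) / k) := by
  rw [paninski_sub_uniform2k]
  have h : (2 * i.val + 1) / 2 = i.val := by omega
  simp [hi, h]

lemma abs_paninski_sub_uniform2k {ε : ℝ} (hε : 0 ≤ ε) (z : Fin k → Bool) (x : Fin (2 * k)) :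
    |paninski k ε z x - uniform2k k x| = ε / k := by
  rw [paninski_sub_uniform2k, abs_mul, abs_div, abs_mul, abs_pm, abs_of_nonneg hε,
    Nat.abs_cast]
  split_ifs <;> simp

lemma sum_paninski_sub_uniform2k (ε : ℝ) (z : Fin k → Bool) :
    ∑ x, (paninski k ε z x - uniform2k k x) = 0 := by
  rw [sum_eq_sum_lo_add_hi]
  simp only [paninski_lo_sub_uniform2k, paninski_hi_sub_uniform2k, add_neg_cancel, sum_const_zero]

lemma sum_paninski (hk : 0 < k) (ε : ℝ) (z : Fin k → Bool) : ∑ x, paninski k ε z x = 1 := by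
  have h := sum_paninski_sub_uniform2k ε z
  rw [sum_sub_distrib, sum_uniform2k hk] at h
  linarith

lemma paninski_isDist (hk : 0 < k) {ε : ℝ} (hε : 0 ≤ ε) (hε2 : ε ≤ 1 / 2)
    (z : Fin k → Bool) : IsDist (paninski k ε z) := by
  refine ⟨fun x => ?_, ?_⟩
  · have hdev := neg_abs_le (paninski k ε z x - uniform2k k x)
    rw [abs_paninski_sub_uniform2k hε] at hdev
    have hu : uniform2k k x = 1 / (2 * k) := by simp [uniform2k]
    have : ε / k ≤ 1 / (2 * k) := by
      rw [div_le_div_iff₀ (by positivity) (by positivity)]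
      nlinarith
    linarith
  · exact sum_paninski hk ε z

lemma tvDist_paninski_uniform2k (hk : 0 < k) {ε : ℝ} (hε : 0 ≤ ε) (z : Fin k → Bool) :
    tvDist (paninski k ε z) (uniform2k k) = ε := by
  simp only [tvDist, abs_paninski_sub_uniform2k hε, sum_const, card_univ, Fintype.card_fin,
    nsmul_eq_mul]
  field_simp
  push_cast
  ring

lemma sum_paninski_sub_mul_paninski_sub (ε : ℝ) (z z' : Fin k → Bool) :
    ∑ x, (paninski k ε z x - uniform2k k x) * (paninski k ε z' x - uniform2k k x) =
      2 * ε ^ 2 * signInner z z' / k ^ 2 := by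
  simp only [sum_eq_sum_lo_add_hi, paninski_lo_sub_uniform2k, paninski_hi_sub_uniform2k, signInner,
    mul_sum, sum_div]
  exact sum_congr rfl fun i _ => by ring

lemma sum_exp_mul_signInner (l : ℝ) (z : Fin k → Bool) :
    ∑ z' : Fin k → Bool, Real.exp (l * signInner z z') = (2 * Real.cosh l) ^ k := by
  have hcoord : ∀ i, ∑ b : Bool, Real.exp (l * (pm (z i) * pm b)) = 2 * Real.cosh l := fun i => by
    rw [Real.cosh_eq, Fintype.sum_bool]
    cases z i <;> simp [pm] <;> ring
  simp only [signInner, mul_sum, Real.exp_sum]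
  rw [← Fintype.prod_sum (fun i b => Real.exp (l * (pm (z i) * pm b)))]
  simp only [hcoord, prod_const, card_univ, Fintype.card_fin]

end Paninski

section Erasure

variable {k : ℕ}

lemma channelOutput_eraseCh_inl (η : ℝ) (xs : Fin (2 * k)) (p : Fin (2 * k) → ℝ)
    (x : Fin (2 * k)) :
    channelOutput (eraseCh k η xs) p (Sum.inl x) = p x * (if x = xs then 1 else η) := by
  simp [channelOutput, eraseCh, eq_comm]

lemma channelOutput_eraseCh_inr (η : ℝ) (xs : Fin (2 * k)) (p : Fin (2 * k) → ℝ) (c : Unit) :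
    channelOutput (eraseCh k η xs) p (Sum.inr c) = (∑ x, p x - p xs) * (1 - η) := by
  simp [channelOutput, eraseCh, mul_ite, sum_ite, filter_ne', sum_erase_eq_sub, ← sum_mul]

lemma eraseCh_isChannel {η : ℝ} (hη0 : 0 ≤ η) (hη1 : η ≤ 1) (xs : Fin (2 * k)) :
    IsChannel (eraseCh k η xs) := by
  intro x
  refine ⟨fun y => ?_, ?_⟩
  · rcases y with y | y <;> simp only [eraseCh, Sum.elim_inl, Sum.elim_inr] <;> split_ifs <;>
      linarith
  · rw [Fintype.sum_sum_type]
    simp only [eraseCh, Sum.elim_inl, Sum.elim_inr, sum_ite_eq', mem_univ, ↓reduceIte,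
      Fintype.sum_unique]
    split_ifs <;> ring

lemma chiCorr_eraseCh {η : ℝ} (xs : Fin (2 * k)) {p q : Fin (2 * k) → ℝ}
    (hp : ∑ x, p x = 1) (hq : ∑ x, q x = 1) :
    chiCorr (channelOutput (eraseCh k η xs) p) (channelOutput (eraseCh k η xs) q)
        (channelOutput (eraseCh k η xs) (uniform2k k)) =
      1 + 2 * k * η * ∑ x, (p x - uniform2k k x) * (q x - uniform2k k x) +
        (1 - η) * (2 * k) ^ 2 / (2 * k - 1) *
          ((p xs - uniform2k k xs) * (q xs - uniform2k k xs)) := by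
  have hk : (1 : ℝ) ≤ k := by exact_mod_cast (show 1 ≤ k by have := xs.isLt; omega)
  have hu : ∀ x, uniform2k k x = (2 * (k : ℝ))⁻¹ := fun _ => rfl
  have hpq : ∑ x, p x * q x =
      ∑ x, (p x - uniform2k k x) * (q x - uniform2k k x) + (2 * (k : ℝ))⁻¹ := by
    simp only [hu, sub_mul, mul_sub, sum_sub_distrib, ← sum_mul, ← mul_sum, hp, hq, sum_const,
      card_univ, Fintype.card_fin, nsmul_eq_mul]
    push_cast
    field_simp
    ring
  rw [chiCorr, Fintype.sum_sum_type]
  simp only [channelOutput_eraseCh_inl, channelOutput_eraseCh_inr, mul_mul_mul_div_mul,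
    sum_mul_ite_eq, hp, hq, sum_const, card_univ, Fintype.card_fin, nsmul_eq_mul, hu] at hpq ⊢
  rw [← sum_div, hpq]
  generalize ∑ x, (p x - (2 * (k : ℝ))⁻¹) * (q x - (2 * (k : ℝ))⁻¹) = D
  have : (2 * (k : ℝ) - 1) ≠ 0 := by linarith
  push_cast [Fintype.card_unit]
  field_simp
  ring

lemma chiCorr_eraseCh_paninski_le {η : ℝ} (hη : η ≤ 1) {ε : ℝ} (hε : 0 ≤ ε)
    (xs : Fin (2 * k)) (z z' : Fin k → Bool) :
    chiCorr (channelOutput (eraseCh k η xs) (paninski k ε z))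
        (channelOutput (eraseCh k η xs) (paninski k ε z'))
        (channelOutput (eraseCh k η xs) (uniform2k k)) ≤
      1 + 4 * η * ε ^ 2 / k * signInner z z' + 4 * ε ^ 2 * (1 - η) / (2 * k - 1) := by
  have hk : 0 < k := by have := xs.isLt; omega
  have hk1 : (1 : ℝ) ≤ k := by exact_mod_cast hk
  have hdev : (paninski k ε z xs - uniform2k k xs) * (paninski k ε z' xs - uniform2k k xs) ≤
      (ε / k) ^ 2 := by
    calc _ ≤ |(paninski k ε z xs - uniform2k k xs) * (paninski k ε z' xs - uniform2k k xs)| :=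
          le_abs_self _
      _ = (ε / k) ^ 2 := by
          rw [abs_mul, abs_paninski_sub_uniform2k hε, abs_paninski_sub_uniform2k hε, sq]
  rw [chiCorr_eraseCh xs (sum_paninski hk ε z) (sum_paninski hk ε z'),
    sum_paninski_sub_mul_paninski_sub]
  have hcoef : 0 ≤ (1 - η) * (2 * k) ^ 2 / (2 * k - 1) :=
    div_nonneg (mul_nonneg (by linarith) (by positivity)) (by linarith)
  calc _ ≤ 1 + 2 * k * η * (2 * ε ^ 2 * signInner z z' / k ^ 2) +
        (1 - η) * (2 * k) ^ 2 / (2 * k - 1) * (ε / k) ^ 2 := by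
        gcongr
    _ = _ := by
        field_simp
        ring

lemma channelOutput_eraseCh_uniform2k_pos {η : ℝ} (hη0 : 0 < η) (hη1 : η < 1)
    (xs : Fin (2 * k)) (c : Fin (2 * k) ⊕ Unit) :
    0 < channelOutput (eraseCh k η xs) (uniform2k k) c := by
  have hk : 0 < k := by have := xs.isLt; omega
  have hk1 : (1 : ℝ) ≤ k := by exact_mod_cast hk
  have hu : ∀ x, uniform2k k x = (2 * (k : ℝ))⁻¹ := fun _ => rfl
  rcases c with x | c
  · rw [channelOutput_eraseCh_inl, hu]
    split_ifs <;> positivity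
  · rw [channelOutput_eraseCh_inr, sum_uniform2k hk, hu]
    have : (2 * (k : ℝ))⁻¹ < 1 := inv_lt_one_of_one_lt₀ (by linarith)
    exact mul_pos (by linarith) (by linarith)

end Erasure

section Mixture

variable {k n : ℕ} {𝒴 : Type*} [Fintype 𝒴]

noncomputable def paninskiMixture (π : Protocol k n 𝒴)
    (ε : ℝ) (y : Fin n → 𝒴) : ℝ :=
  ((2 : ℝ) ^ k)⁻¹ * ∑ z : Fin k → Bool, transDist π (paninski k ε z) y

lemma sum_paninskiMixture (hk : 0 < k) {ε : ℝ} (hε : 0 ≤ ε)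
    (hε2 : ε ≤ 1 / 2) {π : Protocol k n 𝒴} (hπ : ChannelProtocol π) :
    ∑ y, paninskiMixture π ε y = 1 := by
  simp only [paninskiMixture, ← mul_sum]
  rw [sum_comm]
  simp only [transDist, sum_prefixDist hπ (paninski_isDist hk hε hε2 _), sum_const, card_univ,
    Fintype.card_fun, Fintype.card_bool, Fintype.card_fin, nsmul_eq_mul, mul_one]
  push_cast
  field_simp

theorem chiCorr_paninskiMixture_le (hk : 0 < k) {η : ℝ} (hη0 : 0 ≤ η) (hη : η ≤ 1)
    {ε : ℝ} (hε : 0 ≤ ε) (hε2 : ε ≤ 1 / 2) {π : Protocol k n (Fin (2 * k) ⊕ Unit)}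
    (hπ : ChannelProtocol π) (hfam : UsesFamily π { W | ∃ xs, W = eraseCh k η xs }) :
    chiCorr (paninskiMixture π ε) (paninskiMixture π ε) (transDist π (uniform2k k)) ≤
      Real.exp (n * (4 * ε ^ 2 * (1 - η) / (2 * k - 1)) +
        k * (n * (4 * η * ε ^ 2 / k)) ^ 2 / 2) := by
  set a : ℝ := 4 * η * ε ^ 2 / k
  set β : ℝ := 4 * ε ^ 2 * (1 - η) / (2 * k - 1)
  have hpair : ∀ z z' : Fin k → Bool,
      chiCorr (transDist π (paninski k ε z)) (transDist π (paninski k ε z'))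
        (transDist π (uniform2k k)) ≤ Real.exp (n * β) * Real.exp (n * a * signInner z z') := by
    intro z z'
    have hstep : ∀ t pre, chiCorr (channelOutput (π t pre) (paninski k ε z))
        (channelOutput (π t pre) (paninski k ε z')) (channelOutput (π t pre) (uniform2k k)) ≤
        1 + a * signInner z z' + β := fun t pre => by
      obtain ⟨xs, hxs⟩ := hfam t pre
      rw [hxs]
      exact chiCorr_eraseCh_paninski_le hη hε xs z z'
    have hD : 0 ≤ 1 + a * signInner z z' + β := by
      have hW := eraseCh_isChannel hη0 hη (⟨0, by omega⟩ : Fin (2 * k))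
      exact (chiCorr_nonneg (channelOutput_nonneg hW (paninski_isDist hk hε hε2 z).1)
        (channelOutput_nonneg hW (paninski_isDist hk hε hε2 z').1)
        (channelOutput_nonneg hW (uniform2k_isDist hk).1)).trans
        (chiCorr_eraseCh_paninski_le hη hε _ z z')
    calc _ ≤ (1 + a * signInner z z' + β) ^ n :=
          chiCorr_prefixDist_le_pow hπ (paninski_isDist hk hε hε2 z).1
            (paninski_isDist hk hε hε2 z').1 (uniform2k_isDist hk).1 hstep n le_rfl
      _ ≤ Real.exp (a * signInner z z' + β) ^ n := by
          gcongr
          linarith [Real.add_one_le_exp (a * signInner z z' + β)]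
      _ = _ := by rw [← Real.exp_nat_mul, ← Real.exp_add]; ring_nf
  calc chiCorr (paninskiMixture π ε) (paninskiMixture π ε) (transDist π (uniform2k k))
      = ((2 : ℝ) ^ k)⁻¹ ^ 2 * ∑ z : Fin k → Bool, ∑ z' : Fin k → Bool,
          chiCorr (transDist π (paninski k ε z)) (transDist π (paninski k ε z'))
            (transDist π (uniform2k k)) := chiCorr_mul_sum _ _ _
    _ ≤ ((2 : ℝ) ^ k)⁻¹ ^ 2 * ∑ z : Fin k → Bool, ∑ z' : Fin k → Bool,
          Real.exp (n * β) * Real.exp (n * a * signInner z z') := by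
        gcongr with z _ z' _
        exact hpair z z'
    _ = Real.exp (n * β) * Real.cosh (n * a) ^ k := by
        simp only [← mul_sum, sum_exp_mul_signInner, sum_const, card_univ, Fintype.card_fun,
          Fintype.card_bool, Fintype.card_fin, nsmul_eq_mul]
        push_cast
        field_simp
        ring
    _ ≤ Real.exp (n * β) * Real.exp ((n * a) ^ 2 / 2) ^ k := by
        gcongr
        exact Real.cosh_le_exp_half_sq _
    _ = _ := by rw [← Real.exp_nat_mul, ← Real.exp_add]; ring_nf

lemma exists_sum_abs_paninskiMixture_sub_ge {𝒰 : Type*} [Fintype 𝒰]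
    {𝒲 : Set (Fin (2 * k) → 𝒴 → ℝ)} {μ : 𝒰 → ℝ} {π : 𝒰 → Protocol k n 𝒴}
    {T : (Fin n → 𝒴) → 𝒰 → ℝ} {ε : ℝ} (hk : 0 < k) (hε : 0 ≤ ε) (hε2 : ε ≤ 1 / 2)
    (hT : IsUnifTest 𝒲 μ π T ε) :
    ∃ u, 98 / 100 ≤ ∑ y, |paninskiMixture (π u) ε y - transDist (π u) (uniform2k k) y| := by
  obtain ⟨hμ, -, hπ, hT01, haccept, hreject⟩ := hT
  have hmix : 99 / 100 ≤ ∑ u, ∑ y, μ u * (paninskiMixture (π u) ε y * T y u) := by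
    have h : ∀ z : Fin k → Bool,
        99 / 100 ≤ ∑ u, ∑ y, μ u * (transDist (π u) (paninski k ε z) y * T y u) := fun z =>
      hreject _ (paninski_isDist hk hε hε2 z) (tvDist_paninski_uniform2k hk hε z).ge
    calc (99 / 100 : ℝ) = ((2 : ℝ) ^ k)⁻¹ * ∑ _z : Fin k → Bool, 99 / 100 := by simp
      _ ≤ ((2 : ℝ) ^ k)⁻¹ * ∑ z : Fin k → Bool,
            ∑ u, ∑ y, μ u * (transDist (π u) (paninski k ε z) y * T y u) := by
          gcongr with z
          exact h z
      _ = _ := by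
          simp only [paninskiMixture, mul_sum, sum_mul]
          rw [sum_comm]
          refine sum_congr rfl fun u _ => ?_
          rw [sum_comm]
          exact sum_congr rfl fun y _ => sum_congr rfl fun z _ => by ring
  obtain ⟨u, hu⟩ := exists_sum_abs_sub_ge_of_test hμ (P := fun u => transDist (π u) (uniform2k k))
    (fun u => sum_prefixDist (hπ u) (uniform2k_isDist hk) n le_rfl) hT01 haccept hmix
  exact ⟨u, le_of_eq_of_le (by norm_num) hu⟩

theorem one_add_sq_le_exp_of_isUnifTest_eraseCh {𝒰 : Type*} [Fintype 𝒰] {η : ℝ}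
    (hη0 : 0 < η) (hη1 : η < 1) {μ : 𝒰 → ℝ} {π : 𝒰 → Protocol k n (Fin (2 * k) ⊕ Unit)}
    {T : (Fin n → Fin (2 * k) ⊕ Unit) → 𝒰 → ℝ} {ε : ℝ} (hk : 0 < k) (hε : 0 ≤ ε)
    (hε2 : ε ≤ 1 / 2) (hT : IsUnifTest { W | ∃ xs, W = eraseCh k η xs } μ π T ε) :
    1 + (98 / 100) ^ 2 ≤ Real.exp (n * (4 * ε ^ 2 * (1 - η) / (2 * k - 1)) +
      k * (n * (4 * η * ε ^ 2 / k)) ^ 2 / 2) := by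
  obtain ⟨u, hfar⟩ := exists_sum_abs_paninskiMixture_sub_ge hk hε hε2 hT
  have hπ := hT.2.2.1 u
  have hP : ∀ y, 0 < transDist (π u) (uniform2k k) y := prefixDist_pos (fun t pre c => by
    obtain ⟨xs, hxs⟩ := hT.2.1 u t pre
    exact hxs ▸ channelOutput_eraseCh_uniform2k_pos hη0 hη1 xs c) n le_rfl
  have hP1 := sum_prefixDist hπ (uniform2k_isDist hk) n le_rfl
  have hCS := sq_sum_abs_sub_le_chiSq (P := paninskiMixture (π u) ε) hP hP1
  rw [chiSq_eq_chiCorr_sub_one (fun y => (hP y).ne') (sum_paninskiMixture hk hε hε2 hπ) hP1]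
    at hCS
  have hχ := chiCorr_paninskiMixture_le hk hη0.le hη1.le hε hε2 hπ (hT.2.1 u)
  nlinarith [pow_le_pow_left₀ (by norm_num) hfar 2]

lemma erasure_exponent_le_of_sq_eq_inv (hk : 1 ≤ k) {η ε : ℝ} (hη0 : 0 ≤ η)
    (hηsq : η ^ 2 = (k : ℝ)⁻¹) :
    n * (4 * ε ^ 2 * (1 - η) / (2 * k - 1)) + k * (n * (4 * η * ε ^ 2 / k)) ^ 2 / 2 ≤
      4 * (n * ε ^ 2 / k) + 8 * (n * ε ^ 2 / k) ^ 2 := by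
  have hkR : (1 : ℝ) ≤ k := by exact_mod_cast hk
  have hβ : n * (4 * ε ^ 2 * (1 - η) / (2 * k - 1)) ≤ 4 * (n * ε ^ 2 / k) := by
    calc _ ≤ n * (4 * ε ^ 2 / k) := by
          gcongr n * ?_
          exact div_le_div₀ (by positivity) (by nlinarith) (by positivity) (by linarith)
      _ = _ := by ring
  have hcorr : k * (n * (4 * η * ε ^ 2 / k)) ^ 2 / 2 = 8 * (n * ε ^ 2 / k) ^ 2 := by
    rw [mul_pow, div_pow, mul_pow, mul_pow, hηsq]
    field_simp
    ring
  linarith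

end Mixture

/-- Lower bound for interactive uniformity testing under the
partial-erasure constraints `𝒲_⊥^{1/√k}`: any `(n, ε)`-uniformity test needs
`n ≥ c · k / ε²`. -/
theorem testing_lower_bound_partial_erasure :
    ∃ c : ℝ, 0 < c ∧
      ∀ (k : ℕ), 2 ≤ k →
      ∀ ε : ℝ, 0 < ε → ε ≤ 1 / 4 →
      ∀ (𝒰 : Type) [Fintype 𝒰],
      ∀ (n : ℕ) (μ : 𝒰 → ℝ) (π : 𝒰 → Protocol k n (Fin (2 * k) ⊕ Unit))
        (T : (Fin n → (Fin (2 * k) ⊕ Unit)) → 𝒰 → ℝ),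
        IsUnifTest { W | ∃ xs : Fin (2 * k), W = eraseCh k (Real.sqrt k)⁻¹ xs }
          μ π T ε →
        c * (k : ℝ) / ε ^ 2 ≤ (n : ℝ) := by
  refine ⟨1 / 100, by norm_num, fun k hk ε hε hε4 𝒰 _ n μ π T hT => ?_⟩
  have hkR : (2 : ℝ) ≤ k := by exact_mod_cast hk
  have hη0 : 0 < (Real.sqrt k)⁻¹ := by positivity
  have hη1 : (Real.sqrt k)⁻¹ < 1 := inv_lt_one_of_one_lt₀ (Real.lt_sqrt_of_sq_lt (by linarith))
  have hηsq : (Real.sqrt k)⁻¹ ^ 2 = (k : ℝ)⁻¹ := by rw [inv_pow, Real.sq_sqrt (by positivity)]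
  have hbound := (one_add_sq_le_exp_of_isUnifTest_eraseCh hη0 hη1 (by omega) hε.le
    (by linarith) hT).trans (Real.exp_le_exp.mpr
      (erasure_exponent_le_of_sq_eq_inv (by omega) hη0.le hηsq))
  by_contra! hn
  set x : ℝ := n * ε ^ 2 / k
  have hx0 : 0 ≤ x := by positivity
  have hx : x < 1 / 100 := by
    rw [div_lt_iff₀ (by positivity)]
    rw [lt_div_iff₀ (by positivity)] at hn
    linarith
  have hsmall : 4 * x + 8 * x ^ 2 < 1 / 20 := by nlinarith
  have hexp := Real.exp_bound_div_one_sub_of_interval (by positivity) (hsmall.trans (by norm_num))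
  rw [le_div_iff₀ (by linarith)] at hexp
  nlinarith

end Paper
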